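/- arXiv:2312.01589 — 5 statements merged into one kernel-verified Lean document; each statement's English description precedes it below -/
import Mathlib

section
/- Let □ ⊆ ℝ² be a square of side length ε ≤ 0.1, let R ⊆ □ be nonempty, and let D be the closed unit disk. Then R ⊕ D is star-shaped with respect to every point of □; in particular, R ⊕ D is path-connected. -/
open scoped Pointwise
noncomputable section

abbrev Pt := EuclideanSpace ℝ (Fin 2)

/-- The closed unit disk centered at the origin. -/
def unitDisk : Set Pt := Metric.closedBall 0 1

lemma sq_dist_le (ε : ℝ) (hε : 0 < ε) (hε' : ε ≤ 0.1) (c o r : Pt)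
    (ho : ∀ i, |o i - c i| ≤ ε / 2) (hr : ∀ i, |r i - c i| ≤ ε / 2) :
    ‖o - r‖ ≤ 1 := by
  have h : ∀ i, |o i - r i| ≤ ε := fun i => by
    have := abs_sub (o i - c i) (r i - c i)
    calc |o i - r i| = |(o i - c i) - (r i - c i)| := by ring_nf
      _ ≤ |o i - c i| + |r i - c i| := abs_sub _ _
      _ ≤ ε / 2 + ε / 2 := add_le_add (ho i) (hr i)
      _ = ε := by ring
  rw [EuclideanSpace.norm_eq]
  rw [show (1 : ℝ) = Real.sqrt 1 by simp]
  apply Real.sqrt_le_sqrt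
  have hb : ∀ i : Fin 2, ‖(o - r) i‖ ^ 2 ≤ ε ^ 2 := fun i => by
    have : ‖(o - r) i‖ = |o i - r i| := by
      simp [Real.norm_eq_abs]
    rw [this]
    exact pow_le_pow_left₀ (abs_nonneg _) (h i) 2
  calc ∑ i : Fin 2, ‖(o - r) i‖ ^ 2 ≤ ∑ _i : Fin 2, ε ^ 2 :=
        Finset.sum_le_sum fun i _ => hb i
    _ = 2 * ε ^ 2 := by rw [Fin.sum_univ_two]; ring
    _ ≤ 2 * (0.1 : ℝ) ^ 2 := by nlinarith
    _ ≤ 1 := by norm_num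

/-- Let `□ ⊆ ℝ²` be a square of side length `ε ≤ 0.1`, let
`R ⊆ □` be nonempty and `D` the closed unit disk.  Then `R ⊕ D` is star-shaped with
respect to every point of `□`; in particular `R ⊕ D` is path-connected. -/
theorem stmt3 (ε : ℝ) (hε : 0 < ε) (hε' : ε ≤ 0.1) (c : Pt)
    (Sq : Set Pt) (hSq : Sq = {x : Pt | ∀ i, |x i - c i| ≤ ε / 2})
    (R : Set Pt) (hR : R ⊆ Sq) (hRne : R.Nonempty) :
    (∀ o ∈ Sq, ∀ p ∈ R + unitDisk, segment ℝ o p ⊆ R + unitDisk) ∧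
      IsPathConnected (R + unitDisk) := by
  have key : ∀ o ∈ Sq, ∀ p ∈ R + unitDisk, segment ℝ o p ⊆ R + unitDisk := by
    intro o ho p hp x hx
    obtain ⟨r, hrR, d, hd, rfl⟩ := hp
    obtain ⟨a, b, ha, hb, hab, rfl⟩ := hx
    have hb1 : b = 1 - a := by linarith
    subst hb1
    refine ⟨r, hrR, a • (o - r) + (1 - a) • d, ?_, by module⟩
    have hor : ‖o - r‖ ≤ 1 := by
      rw [hSq] at ho
      have hr' := hR hrR
      rw [hSq] at hr'
      exact sq_dist_le ε hε hε' c o r ho hr'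
    have hd' : ‖d‖ ≤ 1 := by
      simpa [unitDisk, Metric.mem_closedBall, dist_eq_norm] using hd
    simp only [unitDisk, Metric.mem_closedBall, dist_zero_right]
    calc ‖a • (o - r) + (1 - a) • d‖ ≤ ‖a • (o - r)‖ + ‖(1 - a) • d‖ := norm_add_le _ _
      _ = a * ‖o - r‖ + (1 - a) * ‖d‖ := by
          rw [norm_smul, norm_smul, Real.norm_eq_abs, Real.norm_eq_abs,
            abs_of_nonneg ha, abs_of_nonneg hb]
      _ ≤ a * 1 + (1 - a) * 1 := add_le_add (mul_le_mul_of_nonneg_left hor ha)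
          (mul_le_mul_of_nonneg_left hd' hb)
      _ = 1 := by ring
  refine ⟨key, ?_⟩
  obtain ⟨r₀, hr₀⟩ := hRne
  have ho : r₀ ∈ R + unitDisk := by
    have : r₀ + 0 ∈ R + unitDisk := ⟨r₀, hr₀, 0, by simp [unitDisk], rfl⟩
    simpa using this
  have hoSq : r₀ ∈ Sq := hR hr₀
  exact ⟨r₀, ho, fun {y} hy => JoinedIn.of_segment_subset (key r₀ hoSq y hy)⟩
end
end

section
/- Let □ ⊆ ℝ² be a square of side length ε ≤ 0.1 with center o, let R ⊆ □ be a nonempty compact set, and let D be the closed unit disk. Then every ray emanating from o intersects the topological boundary of R ⊕ D in exactly one point. -/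
open scoped Pointwise
noncomputable section

/-- Let `□ ⊆ ℝ²` be a square of side length `ε ≤ 0.1` with center `o`,
let `R ⊆ □` be a nonempty compact set, and `D` the closed unit disk.  Then every ray
emanating from `o` intersects the topological boundary of `R ⊕ D` in exactly one point. -/
theorem stmt4 (ε : ℝ) (hε : 0 < ε) (hε' : ε ≤ 0.1) (o : Pt)
    (Sq : Set Pt) (hSq : Sq = {x : Pt | ∀ i, |x i - o i| ≤ ε / 2})
    (R : Set Pt) (hR : R ⊆ Sq) (hRne : R.Nonempty) (hRcomp : IsCompact R)
    (v : Pt) (hv : ‖v‖ = 1) :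
    ∃! p : Pt, p ∈ frontier (R + unitDisk) ∧ ∃ t : ℝ, 0 ≤ t ∧ p = o + t • v := by
  obtain ⟨r, hr⟩ := hRne
  set S : Set Pt := R + unitDisk with hSdef
  have hε1 : ε < 1 := by linarith [hε']
  -- distance bound from o to points of R
  have key : ∀ a ∈ R, ‖o - a‖ ≤ ε := by
    intro a ha
    have h : ∀ i, |a i - o i| ≤ ε / 2 := by have := hR ha; rwa [hSq] at this
    have h2 : ‖o - a‖ ^ 2 ≤ ε ^ 2 := by
      rw [EuclideanSpace.norm_eq, Real.sq_sqrt (by positivity)]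
      have hi : ∀ i : Fin 2, ‖(o - a) i‖ ^ 2 ≤ (ε / 2) ^ 2 := by
        intro i
        have hii := h i
        have : ‖(o - a) i‖ = |a i - o i| := by
          simp [Real.norm_eq_abs, abs_sub_comm]
        rw [this]
        exact pow_le_pow_left₀ (abs_nonneg _) hii 2
      calc ∑ i, ‖(o - a) i‖ ^ 2 ≤ ∑ _i : Fin 2, (ε / 2) ^ 2 :=
            Finset.sum_le_sum (fun i _ => hi i)
        _ = 2 * (ε / 2) ^ 2 := by simp
        _ ≤ ε ^ 2 := by nlinarith
    nlinarith [norm_nonneg (o - a)]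
  have hDcomp : IsCompact unitDisk := isCompact_closedBall 0 1
  have hScomp : IsCompact S := hRcomp.add hDcomp
  have hSclosed : IsClosed S := hScomp.isClosed
  -- membership helper
  have hmem : ∀ a ∈ R, ∀ w : Pt, ‖w‖ ≤ 1 → a + w ∈ S := by
    intro a ha w hw
    exact Set.add_mem_add ha (mem_closedBall_zero_iff.mpr hw)
  have hintmem : ∀ a ∈ R, ∀ w : Pt, ‖w‖ < 1 → a + w ∈ interior S := by
    intro a ha w hw
    have hsub : {a} + Metric.ball (0 : Pt) 1 ⊆ S :=
      Set.add_subset_add (Set.singleton_subset_iff.mpr ha) Metric.ball_subset_closedBall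
    have hopen : IsOpen ({a} + Metric.ball (0 : Pt) 1) :=
      Metric.isOpen_ball.add_left
    exact interior_maximal hsub hopen
      (Set.add_mem_add (Set.mem_singleton a) (mem_ball_zero_iff.mpr hw))
  -- star-shapedness: points strictly between o and a point of S are interior
  have hstar : ∀ p ∈ S, ∀ t : ℝ, 0 ≤ t → t < 1 → o + t • (p - o) ∈ interior S := by
    intro p hp t ht ht1
    obtain ⟨a, ha, d, hd, rfl⟩ := Set.mem_add.mp hp
    have hd' : ‖d‖ ≤ 1 := mem_closedBall_zero_iff.mp hd
    have heq : o + t • (a + d - o) = a + ((1 - t) • (o - a) + t • d) := by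
      module
    rw [heq]
    refine hintmem a ha _ ?_
    calc ‖(1 - t) • (o - a) + t • d‖ ≤ ‖(1 - t) • (o - a)‖ + ‖t • d‖ := norm_add_le _ _
      _ = (1 - t) * ‖o - a‖ + t * ‖d‖ := by
          rw [norm_smul, norm_smul, Real.norm_eq_abs, Real.norm_eq_abs,
            abs_of_nonneg (by linarith), abs_of_nonneg ht]
      _ ≤ (1 - t) * ε + t * 1 := by
          have := key a ha
          have h1t : (0:ℝ) ≤ 1 - t := by linarith
          gcongr
      _ < 1 := by nlinarith
  -- the ray
  set f : ℝ → Pt := fun t => o + t • v with hf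
  set T : Set ℝ := {t : ℝ | 0 ≤ t ∧ f t ∈ S} with hT
  have hfm : ∀ t : ℝ, 0 ≤ t → t ≤ 1 - ε → f t ∈ S := by
    intro t ht ht'
    have : f t = r + (o - r + t • v) := by simp [hf]; module
    rw [this]
    refine hmem r hr _ ?_
    calc ‖o - r + t • v‖ ≤ ‖o - r‖ + ‖t • v‖ := norm_add_le _ _
      _ ≤ ε + t := by
          rw [norm_smul, Real.norm_eq_abs, abs_of_nonneg ht, hv, mul_one]
          have := key r hr
          linarith
      _ ≤ 1 := by linarith
  have hTne : T.Nonempty := ⟨0, le_refl 0, hfm 0 le_rfl (by linarith)⟩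
  have hTbdd : BddAbove T := by
    obtain ⟨M, hM⟩ := hScomp.isBounded.subset_closedBall 0
    refine ⟨M + ‖o‖, fun t ht => ?_⟩
    have h1 : ‖f t‖ ≤ M := mem_closedBall_zero_iff.mp (hM ht.2)
    have h2 : ‖t • v‖ = t := by
      rw [norm_smul, Real.norm_eq_abs, abs_of_nonneg ht.1, hv, mul_one]
    have h3 : ‖t • v‖ ≤ ‖f t‖ + ‖o‖ := by
      have heq : t • v = f t - o := by simp [hf]
      rw [heq]
      exact norm_sub_le _ _
    linarith [h2 ▸ h3]
  have hTclosed : IsClosed T := by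
    have : T = Set.Ici 0 ∩ f ⁻¹' S := by
      ext t; simp [hT, Set.mem_Ici, Set.mem_preimage]
    rw [this]
    exact isClosed_Ici.inter (hSclosed.preimage
      (continuous_const.add (continuous_id.smul continuous_const)))
  set t₀ : ℝ := sSup T with ht₀
  have ht₀mem : t₀ ∈ T := hTclosed.csSup_mem hTne hTbdd
  have ht₀pos : 0 < t₀ := by
    have h9 : (1 - ε) ∈ T := ⟨by linarith, hfm _ (by linarith) le_rfl⟩
    have := le_csSup hTbdd h9
    linarith
  have hub : ∀ t ∈ T, t ≤ t₀ := fun t ht => le_csSup hTbdd ht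
  -- p := f t₀ is on the frontier
  have hpnotint : f t₀ ∉ interior S := by
    intro hint
    obtain ⟨δ, hδ, hball⟩ := Metric.isOpen_iff.mp isOpen_interior _ hint
    have hmem' : f (t₀ + δ / 2) ∈ S := by
      apply interior_subset
      apply hball
      rw [Metric.mem_ball, dist_eq_norm]
      have : f (t₀ + δ / 2) - f t₀ = (δ / 2) • v := by simp [hf]; module
      rw [this, norm_smul, Real.norm_eq_abs, abs_of_nonneg (by linarith), hv, mul_one]
      linarith
    have : t₀ + δ / 2 ∈ T := ⟨by linarith [ht₀mem.1], hmem'⟩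
    have := hub _ this
    linarith
  have hpfr : f t₀ ∈ frontier S := by
    rw [hSclosed.frontier_eq]
    exact ⟨ht₀mem.2, hpnotint⟩
  refine ⟨f t₀, ⟨hpfr, t₀, ht₀mem.1, rfl⟩, ?_⟩
  rintro q ⟨hqfr, t, ht, rfl⟩
  -- uniqueness
  have hqS : f t ∈ S := by
    rw [hSclosed.frontier_eq] at hqfr; exact hqfr.1
  have hle : t ≤ t₀ := hub t ⟨ht, hqS⟩
  rcases eq_or_lt_of_le hle with heq | hlt
  · rw [heq]
  · exfalso
    have hq_int : f t ∈ interior S := by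
      have hfrac0 : 0 ≤ t / t₀ := div_nonneg ht ht₀pos.le
      have hfrac1 : t / t₀ < 1 := (div_lt_one ht₀pos).mpr hlt
      have : f t = o + (t / t₀) • (f t₀ - o) := by
        simp only [hf]
        rw [add_sub_cancel_left, smul_smul, div_mul_cancel₀ _ ht₀pos.ne']
      rw [this]
      exact hstar _ ht₀mem.2 _ hfrac0 hfrac1
    rw [hSclosed.frontier_eq] at hqfr
    exact hqfr.2 hq_int
end
end

section
/- Let □ ⊆ ℝ² be a square of side length ε ≤ 0.1 with center o, let R ⊆ □ be a nonempty compact set, and let D be the closed unit disk. Then the map π : ∂(R ⊕ D) → S¹ defined by π(p) = (p − o)/‖p − o‖ is a homeomorphism between the boundary of R ⊕ D and the unit circle. -/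
open scoped Pointwise
noncomputable section

/-!
Every point of `R` lies within `ε/√2 < 1` of `o`, so `o` is an interior point of each unit disk
centred at a point of `R`. Hence `K = R ⊕ D`, the union of these disks, contains `o` in its
interior, and the open segment from `o` to any point of `K` stays inside the interior of one of
the disks. A compact set with this property meets every ray from `o` in exactly one frontier
point: the farthest point of `K` on the ray is a frontier point, and a nearer one would lie on an
open segment from `o` to a point of `K`. The radial projection is therefore a continuous bijection
from the compact set `∂K` onto the circle, hence a homeomorphism.
-/

open Metric Set Filter Topology

theorem ne_of_mem_frontier_of_mem_interior {X : Type*} [TopologicalSpace X] {s : Set X} {x y : X}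
    (hx : x ∈ frontier s) (hy : y ∈ interior s) : x ≠ y :=
  fun h ↦ hx.2 (h ▸ hy)

section Radial

variable {E : Type*} [NormedAddCommGroup E] [NormedSpace ℝ E] {K : Set E} {o : E}

def radialProjection (o p : E) : E := ‖p - o‖⁻¹ • (p - o)

theorem norm_radialProjection {p : E} (hp : p ≠ o) : ‖radialProjection o p‖ = 1 := by
  rw [radialProjection, norm_smul, norm_inv, norm_norm,
    inv_mul_cancel₀ (norm_ne_zero_iff.2 (sub_ne_zero.2 hp))]

theorem radialProjection_add_smul {t : ℝ} (ht : 0 < t) {u : E} (hu : ‖u‖ = 1) :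
    radialProjection o (o + t • u) = u := by
  rw [radialProjection, add_sub_cancel_left, norm_smul, hu, mul_one, Real.norm_of_nonneg ht.le,
    smul_smul, inv_mul_cancel₀ ht.ne', one_smul]

theorem continuousOn_radialProjection : ContinuousOn (radialProjection o) {o}ᶜ := by
  intro p hp
  refine ((continuousAt_id.sub continuousAt_const).norm.inv₀ ?_).smul
    (continuousAt_id.sub continuousAt_const) |>.continuousWithinAt
  exact norm_ne_zero_iff.2 (sub_ne_zero.2 hp)

theorem mem_openSegment_of_radialProjection_eq {p q : E} (hp : p ≠ o)
    (hpq : ‖p - o‖ < ‖q - o‖) (h : radialProjection o p = radialProjection o q) :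
    p ∈ openSegment ℝ o q := by
  have hp' : 0 < ‖p - o‖ := norm_pos_iff.2 (sub_ne_zero.2 hp)
  rw [openSegment_eq_image_lineMap]
  have hq' : 0 < ‖q - o‖ := hp'.trans hpq
  refine ⟨‖p - o‖ / ‖q - o‖, ⟨div_pos hp' hq', (div_lt_one hq').2 hpq⟩, ?_⟩
  rw [AffineMap.lineMap_apply, vadd_eq_add, vsub_eq_sub, div_eq_mul_inv, mul_smul]
  rw [radialProjection, radialProjection] at h
  rw [← h, smul_smul, mul_inv_cancel₀ hp'.ne', one_smul, sub_add_cancel]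

theorem eq_of_radialProjection_eq_of_norm_eq {p q : E} (hp : p ≠ o)
    (hpq : ‖p - o‖ = ‖q - o‖) (h : radialProjection o p = radialProjection o q) : p = q := by
  rw [radialProjection, radialProjection, hpq] at h
  have hq : ‖q - o‖ ≠ 0 := hpq ▸ norm_ne_zero_iff.2 (sub_ne_zero.2 hp)
  simpa using smul_right_injective E (inv_ne_zero hq) h

theorem lt_csSup_of_mem_nhds {α : Type*} [ConditionallyCompleteLinearOrder α]
    [TopologicalSpace α] [OrderTopology α] [DenselyOrdered α] [NoMaxOrder α] {S : Set α} {t : α}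
    (hS : BddAbove S) (ht : S ∈ 𝓝 t) : t < sSup S := by
  obtain ⟨u, htu, hu⟩ := Filter.Eventually.exists_gt ht
  exact lt_csSup_of_lt hS hu htu

theorem exists_pos_add_smul_mem_frontier (hK : IsCompact K) (ho : o ∈ interior K) {u : E}
    (hu : ‖u‖ = 1) : ∃ t : ℝ, 0 < t ∧ o + t • u ∈ frontier K := by
  set γ : ℝ → E := fun t ↦ o + t • u
  have hγ : Isometry γ := Isometry.of_dist_eq fun s t ↦ by
    rw [dist_add_left, dist_eq_norm, ← sub_smul, norm_smul, hu, mul_one, Real.dist_eq,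
      Real.norm_eq_abs]
  have hS : IsCompact (γ ⁻¹' K) := hγ.isClosedEmbedding.isCompact_preimage hK
  have hnhds : ∀ t, γ t ∈ interior K → γ ⁻¹' K ∈ 𝓝 t := fun t ht ↦
    mem_of_superset (hγ.continuous.continuousAt.preimage_mem_nhds (isOpen_interior.mem_nhds ht))
      (preimage_mono interior_subset)
  have hγ0 : γ 0 = o := by simp [γ]
  refine ⟨sSup (γ ⁻¹' K), ?_, ?_⟩
  · exact lt_csSup_of_mem_nhds hS.bddAbove (hnhds 0 (hγ0 ▸ ho))
  · rw [hK.isClosed.frontier_eq]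
    exact ⟨hS.sSup_mem ⟨(0 : ℝ), by simpa [hγ0] using interior_subset ho⟩,
      fun h ↦ (lt_csSup_of_mem_nhds hS.bddAbove (hnhds _ h)).false⟩

variable (hK : IsCompact K) (ho : o ∈ interior K)
  (hstar : ∀ p ∈ K, openSegment ℝ o p ⊆ interior K)
include hK ho

theorem surjOn_radialProjection_frontier :
    SurjOn (radialProjection o) (frontier K) (sphere 0 1) := by
  intro u hu
  rw [mem_sphere_zero_iff_norm] at hu
  obtain ⟨t, ht, hfr⟩ := exists_pos_add_smul_mem_frontier hK ho hu
  exact ⟨_, hfr, radialProjection_add_smul ht hu⟩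

include hstar in
theorem injOn_radialProjection_frontier : InjOn (radialProjection o) (frontier K) := by
  have hnot : ∀ p ∈ frontier K, ∀ q ∈ frontier K, ‖p - o‖ < ‖q - o‖ →
      radialProjection o p ≠ radialProjection o q := fun p hp q hq hlt h ↦
    hp.2 (hstar q (hK.isClosed.frontier_subset hq)
      (mem_openSegment_of_radialProjection_eq (ne_of_mem_frontier_of_mem_interior hp ho) hlt h))
  intro p hp q hq h
  rcases lt_trichotomy ‖p - o‖ ‖q - o‖ with hlt | heq | hgt
  · exact absurd h (hnot p hp q hq hlt)
  · exact eq_of_radialProjection_eq_of_norm_eq (ne_of_mem_frontier_of_mem_interior hp ho) heq h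
  · exact absurd h.symm (hnot q hq p hp hgt)

include hstar in
theorem exists_homeomorph_frontier_sphere :
    ∃ h : frontier K ≃ₜ sphere (0 : E) 1, ∀ p, (h p : E) = radialProjection o p := by
  have hmaps : MapsTo (radialProjection o) (frontier K) (sphere 0 1) := fun p hp ↦
    mem_sphere_zero_iff_norm.2 (norm_radialProjection (ne_of_mem_frontier_of_mem_interior hp ho))
  have hbij : Function.Bijective (hmaps.restrict _ _ _) :=
    (BijOn.mk hmaps (injOn_radialProjection_frontier hK ho hstar)
      (surjOn_radialProjection_frontier hK ho)).bijective
  have hcont : Continuous (hmaps.restrict _ _ _) :=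
    (continuousOn_radialProjection.mono fun _ hp ↦
      ne_of_mem_frontier_of_mem_interior hp ho).mapsToRestrict hmaps
  have : CompactSpace (frontier K) := isCompact_iff_compactSpace.1 <|
    hK.of_isClosed_subset isClosed_frontier hK.isClosed.frontier_subset
  exact ⟨Continuous.homeoOfEquivCompactToT2 (f := Equiv.ofBijective _ hbij) hcont,
    fun _ ↦ rfl⟩

end Radial

section Thickening

variable {E : Type*} [NormedAddCommGroup E] {R : Set E} {o : E} {δ : ℝ}

theorem closedBall_subset_add_closedBall_zero {r : E} (hr : r ∈ R) :
    closedBall r δ ⊆ R + closedBall 0 δ := by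
  rw [← singleton_add_closedBall_zero]
  exact add_subset_add_right (singleton_subset_iff.2 hr)

theorem mem_interior_add_closedBall (hR : R ⊆ ball o δ) (hne : R.Nonempty) :
    o ∈ interior (R + closedBall 0 δ) := by
  obtain ⟨r, hr⟩ := hne
  exact interior_mono (closedBall_subset_add_closedBall_zero hr)
    (ball_subset_interior_closedBall (mem_ball_comm.1 (hR hr)))

variable [NormedSpace ℝ E]

theorem openSegment_subset_interior_add_closedBall (hR : R ⊆ ball o δ) {p : E}
    (hp : p ∈ R + closedBall 0 δ) : openSegment ℝ o p ⊆ interior (R + closedBall 0 δ) := by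
  obtain ⟨r, hr, d, hd, rfl⟩ := hp
  have ho : o ∈ interior (closedBall r δ) :=
    ball_subset_interior_closedBall (mem_ball_comm.1 (hR hr))
  have hp : r + d ∈ closedBall r δ := by simpa using hd
  exact ((convex_closedBall r δ).openSegment_interior_closure_subset_interior ho
    (subset_closure hp)).trans (interior_mono (closedBall_subset_add_closedBall_zero hr))

end Thickening

theorem EuclideanSpace.norm_le_sqrt_card_mul {ι : Type*} [Fintype ι] [Nonempty ι]
    {x : EuclideanSpace ℝ ι} {c : ℝ} (h : ∀ i, |x i| ≤ c) :
    ‖x‖ ≤ √(Fintype.card ι) * c := by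
  have hc : 0 ≤ c := (abs_nonneg _).trans (h (Classical.arbitrary ι))
  calc ‖x‖ = √(∑ i, ‖x i‖ ^ 2) := EuclideanSpace.norm_eq x
    _ ≤ √(∑ _i : ι, c ^ 2) :=
      Real.sqrt_le_sqrt (Finset.sum_le_sum fun i _ ↦ pow_le_pow_left₀ (norm_nonneg _) (h i) 2)
    _ = √(Fintype.card ι) * c := by
      rw [Finset.sum_const, Finset.card_univ, nsmul_eq_mul, Real.sqrt_mul (Nat.cast_nonneg _),
        Real.sqrt_sq hc]

theorem square_subset_ball {ε : ℝ} (hε : ε ≤ 0.1) (o : Pt) :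
    {x : Pt | ∀ i, |x i - o i| ≤ ε / 2} ⊆ ball o 1 := by
  intro x hx
  have hnorm : ‖x - o‖ ≤ √2 * (ε / 2) := by
    simpa using EuclideanSpace.norm_le_sqrt_card_mul (x := x - o) (by simpa using hx)
  have hsqrt : √2 < 2 := by norm_num [Real.sqrt_lt']
  rw [mem_ball, dist_eq_norm]
  nlinarith [Real.sqrt_nonneg 2]

theorem stmt5_general (ε : ℝ) (hε' : ε ≤ 0.1) (o : Pt)
    (Sq : Set Pt) (hSq : Sq = {x : Pt | ∀ i, |x i - o i| ≤ ε / 2})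
    (R : Set Pt) (hR : R ⊆ Sq) (hRne : R.Nonempty) (hRcomp : IsCompact R) :
    ∃ h : (frontier (R + unitDisk) : Set Pt) ≃ₜ (Metric.sphere (0 : Pt) 1 : Set Pt),
      ∀ p : (frontier (R + unitDisk) : Set Pt),
        (h p : Pt) = ‖(p : Pt) - o‖⁻¹ • ((p : Pt) - o) := by
  have hRball : R ⊆ ball o 1 := hSq ▸ hR |>.trans (square_subset_ball hε' o)
  exact exists_homeomorph_frontier_sphere (hRcomp.add (isCompact_closedBall 0 1))
    (mem_interior_add_closedBall hRball hRne)
    fun _ hp ↦ openSegment_subset_interior_add_closedBall hRball hp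

/-- Let `□ ⊆ ℝ²` be a square of side length `ε ≤ 0.1` with center `o`,
let `R ⊆ □` be a nonempty compact set, and `D` the closed unit disk.  Then the radial
projection `p ↦ (p - o)/‖p - o‖` is a homeomorphism between `∂(R ⊕ D)` and the unit
circle. -/
theorem stmt5 (ε : ℝ) (hε : 0 < ε) (hε' : ε ≤ 0.1) (o : Pt)
    (Sq : Set Pt) (hSq : Sq = {x : Pt | ∀ i, |x i - o i| ≤ ε / 2})
    (R : Set Pt) (hR : R ⊆ Sq) (hRne : R.Nonempty) (hRcomp : IsCompact R) :
    ∃ h : (frontier (R + unitDisk) : Set Pt) ≃ₜ (Metric.sphere (0 : Pt) 1 : Set Pt),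
      ∀ p : (frontier (R + unitDisk) : Set Pt),
        (h p : Pt) = ‖(p : Pt) - o‖⁻¹ • ((p : Pt) - o) :=
  stmt5_general ε hε' o Sq hSq R hR hRne hRcomp
end
end

section
/- Let γ and γ' be two mutually monotone circular curves consisting of m and m' circular arcs respectively. Then γ and γ' have O(m + m') proper intersection points; specifically, at most 2(m + m' + 1) proper intersection points. -/
noncomputable section

/-- A set in the plane that is either a circle (of positive radius) or a line
(a segment counts as a circular arc of an "infinite circle"). -/
def IsCircleOrLine (C : Set Pt) : Prop :=
  (∃ c : Pt, ∃ r : ℝ, 0 < r ∧ C = Metric.sphere c r) ∨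
  (∃ n : Pt, ∃ b : ℝ, n ≠ 0 ∧ C = {x : Pt | (inner ℝ n x : ℝ) = b})

/-- `p` is a proper (isolated) intersection point of the sets `A` and `B`. -/
def IsProperIntersection (A B : Set Pt) (p : Pt) : Prop :=
  p ∈ A ∩ B ∧ ∃ U ∈ nhds p, U ∩ (A ∩ B) = {p}

/-- `f` parametrizes, over `[0,1]`, a `v`-monotone circular curve with image `γ`
consisting of `m` circular arcs delimited by the breakpoints `x 0 < x 1 < ⋯ < x m`. -/
def IsMonotoneCircularCurve (v : Pt) (f : ℝ → Pt) (γ : Set Pt) (m : ℕ) (x : ℕ → ℝ) :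
    Prop :=
  ContinuousOn f (Set.Icc 0 1) ∧ f '' Set.Icc 0 1 = γ ∧
  StrictMonoOn (fun t : ℝ => (inner ℝ v (f t) : ℝ)) (Set.Icc 0 1) ∧
  x 0 = 0 ∧ x m = 1 ∧ (∀ i < m, x i < x (i + 1)) ∧
  (∀ i < m, ∃ C : Set Pt, IsCircleOrLine C ∧ f '' Set.Icc (x i) (x (i + 1)) ⊆ C)

/-!
Project everything onto the direction `v`. The projections of the breakpoints of both curves cut
the line into at most `m + m' + 1` slabs, and inside one slab each curve is an arc of a single
circle or line; since `⟪v, ·⟫` is injective on a monotone curve, it suffices to see that a slab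
contains at most two proper intersection points. If the two arcs lie on different circles or
lines, this holds because those meet in at most two points. If they lie on the same circle or
line `C`, then next to an isolated common point `p` the two curves pass through distinct points
of `C` with the same projection, so `p` is a limit of chords of `C` orthogonal to `v`. On a circle
this forces `p` to be one of the two points of `C` extremal in the direction `v`; on a line it
forces the line to be orthogonal to `v`, so that all such `p` have the same projection.
-/

open Set Module
open scoped RealInnerProductSpace

lemma Set.encard_le_two_of_forall_eq_or_eq {α : Type*} {s : Set α}
    (h : ∀ a ∈ s, ∀ b ∈ s, a ≠ b → ∀ p ∈ s, p = a ∨ p = b) : s.encard ≤ 2 := by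
  by_cases hs : s.Subsingleton
  · exact (encard_le_one_iff_subsingleton.2 hs).trans (by norm_num)
  · obtain ⟨a, ha, b, hb, hab⟩ := Set.not_subsingleton_iff.1 hs
    calc s.encard ≤ ({a, b} : Set α).encard := encard_le_encard fun p hp => h a ha b hb hab p hp
      _ = 2 := encard_pair hab

lemma Set.subset_union_of_forall_Icc_insert {α β : Type*} [LinearOrder β] {q : α → β}
    {P : Set α} {B : Finset β} {M : β} (hM : ∀ c ∈ B, c < M) (hB : B.Nonempty)
    (hcover : ∀ p ∈ P, ∃ a ∈ insert M B, ∃ b ∈ insert M B, a < b ∧ q p ∈ Icc a b) :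
    P ⊆ {p ∈ P | ∃ a ∈ B, ∃ b ∈ B, a < b ∧ q p ∈ Icc a b} ∪ {p ∈ P | q p ∈ Icc (B.max' hB) M} := by
  intro p hp
  obtain ⟨a, ha, b, hb, hab, hpab⟩ := hcover p hp
  have hbM : b ≤ M := by
    rcases Finset.mem_insert.1 hb with rfl | hb
    exacts [le_rfl, (hM b hb).le]
  have haB : a ∈ B := (Finset.mem_insert.1 ha).resolve_left (hab.trans_le hbM).ne
  by_cases hpM' : B.max' hB ≤ q p
  · exact Or.inr ⟨hp, hpM', hpab.2.trans hbM⟩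
  · exact Or.inl ⟨hp, a, haB, _, B.max'_mem hB, hpab.1.trans_lt (not_le.1 hpM'), hpab.1,
      (not_le.1 hpM').le⟩

theorem Set.encard_le_card_sub_one_mul_of_forall_Icc {α β : Type*} [LinearOrder β] (q : α → β)
    (k : ℕ∞) (B : Finset β) (P : Set α)
    (hcover : ∀ p ∈ P, ∃ a ∈ B, ∃ b ∈ B, a < b ∧ q p ∈ Icc a b)
    (hslab : ∀ a ∈ B, ∀ b ∈ B, a < b → (∀ c ∈ B, c ∉ Ioo a b) →
      {p ∈ P | q p ∈ Icc a b}.encard ≤ k) :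
    P.encard ≤ (B.card - 1 : ℕ) * k := by
  classical
  induction B using Finset.induction_on_max generalizing P with
  | empty => simp [eq_empty_of_forall_notMem fun p hp => by simpa using hcover p hp]
  | insert M B hM ih =>
    rcases B.eq_empty_or_nonempty with rfl | hB
    · suffices P = ∅ by simp [this]
      refine eq_empty_of_forall_notMem fun p hp => ?_
      obtain ⟨a, ha, b, hb, hab, -⟩ := hcover p hp
      simp only [insert_empty_eq, Finset.mem_singleton] at ha hb
      exact hab.ne (ha.trans hb.symm)
    have hleft := ih {p ∈ P | ∃ a ∈ B, ∃ b ∈ B, a < b ∧ q p ∈ Icc a b} (fun p hp => hp.2)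
      fun a ha b hb hab hcons => (encard_le_encard fun p hp => by exact ⟨hp.1.1, hp.2⟩).trans <|
        hslab a (Finset.mem_insert_of_mem ha) b (Finset.mem_insert_of_mem hb) hab fun c hc => by
          rcases Finset.mem_insert.1 hc with rfl | hc
          exacts [fun h => (hM b hb).not_ge h.2.le, hcons c hc]
    have hright := hslab _ (Finset.mem_insert_of_mem (B.max'_mem hB)) M
      (Finset.mem_insert_self M B) (hM _ (B.max'_mem hB)) fun c hc h => by
        rcases Finset.mem_insert.1 hc with rfl | hc
        exacts [h.2.false, (B.le_max' c hc).not_gt h.1]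
    obtain ⟨n, hn⟩ := Nat.exists_eq_add_of_lt (Finset.card_pos.2 hB)
    calc P.encard ≤ _ := encard_le_encard (subset_union_of_forall_Icc_insert hM hB hcover)
      _ ≤ _ := encard_union_le _ _
      _ ≤ (B.card - 1 : ℕ) * k + k := add_le_add hleft hright
      _ = ((insert M B).card - 1 : ℕ) * k := by
        rw [Finset.card_insert_of_notMem fun h => (hM M h).false, hn]
        push_cast
        ring

section Planar

variable {E : Type*} [NormedAddCommGroup E] [InnerProductSpace ℝ E] [Fact (finrank ℝ E = 2)]

lemma collinear_setOf_inner_eq {n : E} (hn : n ≠ 0) (b : ℝ) :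
    Collinear ℝ {x : E | ⟪n, x⟫ = b} := by
  have : FiniteDimensional ℝ E := .of_fact_finrank_eq_succ 1
  rw [collinear_iff_finrank_le_one]
  calc finrank ℝ (vectorSpan ℝ {x : E | ⟪n, x⟫ = b}) ≤ finrank ℝ (ℝ ∙ n)ᗮ := by
        refine Submodule.finrank_mono ?_
        rw [vectorSpan_def, Submodule.span_le]
        rintro _ ⟨y, hy, z, hz, rfl⟩
        simp_all [Submodule.mem_orthogonal_singleton_iff_inner_right, inner_sub_right]
    _ = 1 := Submodule.finrank_orthogonal_span_singleton hn

lemma encard_sphere_inter_setOf_inner_eq_le_two {n : E} (hn : n ≠ 0) (c : E) (r b : ℝ) :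
    (Metric.sphere c r ∩ {x : E | ⟪n, x⟫ = b}).encard ≤ 2 := by
  refine encard_le_two_of_forall_eq_or_eq fun p₁ h₁ p₂ h₂ h₁₂ p h => ?_
  by_contra! hp
  have hcol : Collinear ℝ {p₁, p₂, p} :=
    (collinear_setOf_inner_eq hn b).subset (by simp [insert_subset_iff, h₁.2, h₂.2, h.2.out])
  have hsph : EuclideanGeometry.Cospherical ({p₁, p₂, p} : Set E) :=
    ⟨c, r, by rintro q (rfl | rfl | rfl) <;> [exact h₁.1; exact h₂.1; exact h.1]⟩
  exact affineIndependent_iff_not_collinear_set.1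
    (hsph.affineIndependent_of_ne h₁₂ hp.1.symm hp.2.symm) hcol

lemma encard_sphere_inter_sphere_le_two {c c' : E} {r r' : ℝ}
    (hne : Metric.sphere c r ≠ Metric.sphere c' r') :
    (Metric.sphere c r ∩ Metric.sphere c' r').encard ≤ 2 := by
  have : FiniteDimensional ℝ E := .of_fact_finrank_eq_succ 1
  exact encard_le_two_of_forall_eq_or_eq fun _ h₁ _ h₂ h₁₂ _ h =>
    EuclideanGeometry.eq_of_mem_sphere_of_mem_sphere_of_finrank_eq_two
      (s₁ := ⟨c, r⟩) (s₂ := ⟨c', r'⟩) Fact.out (by rintro ⟨⟩; exact hne rfl) h₁₂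
      h₁.1 h₂.1 h.1 h₁.2 h₂.2 h.2

lemma setOf_inner_eq_eq_of_mem_of_mem {n n' p₁ p₂ : E} {b b' : ℝ} (hn : n ≠ 0) (hn' : n' ≠ 0)
    (h₁₂ : p₁ ≠ p₂) (h₁ : ⟪n, p₁⟫ = b) (h₂ : ⟪n, p₂⟫ = b) (h₁' : ⟪n', p₁⟫ = b')
    (h₂' : ⟪n', p₂⟫ = b') : {x : E | ⟪n, x⟫ = b} = {x | ⟪n', x⟫ = b'} := by
  have hmem : n' ∈ ℝ ∙ n :=
    Submodule.mem_span_singleton_of_inner_eq_zero_of_inner_eq_zero (sub_ne_zero.2 h₁₂.symm) hn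
      (by rw [inner_sub_left, real_inner_comm, h₂', real_inner_comm, h₁', sub_self])
      (by rw [inner_sub_left, real_inner_comm, h₂, real_inner_comm, h₁, sub_self])
  obtain ⟨t, rfl⟩ := Submodule.mem_span_singleton.1 hmem
  have ht : t ≠ 0 := by rintro rfl; simp at hn'
  ext x
  simp only [mem_ofPred_eq, inner_smul_left, RCLike.conj_to_real, ← h₁', ← h₁]
  exact (mul_right_inj' ht).symm

def IsLimitOfOrthogonalChords (v : E) (C : Set E) (p : E) : Prop :=
  ∀ ε > 0, ∃ a ∈ C, ∃ b ∈ C, a ≠ b ∧ ⟪v, a⟫ = ⟪v, b⟫ ∧ dist a p < ε ∧ dist b p < ε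

lemma inner_eq_add_or_eq_sub_of_isLimitOfOrthogonalChords {v c p : E} {r : ℝ} (hv : ‖v‖ = 1)
    (hp : p ∈ Metric.sphere c r) (hlim : IsLimitOfOrthogonalChords v (Metric.sphere c r) p) :
    ⟪v, p⟫ = ⟪v, c⟫ + r ∨ ⟪v, p⟫ = ⟪v, c⟫ - r := by
  have : FiniteDimensional ℝ E := .of_fact_finrank_eq_succ 1
  have hv0 : v ≠ 0 := by rintro rfl; simp at hv
  -- the midpoint of a chord orthogonal to `v` lies on the line through `c` in direction `v`
  have hmem : p - c ∈ ℝ ∙ v := by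
    rw [← SetLike.mem_coe, ← (ℝ ∙ v).closed_of_finiteDimensional.closure_eq,
      Metric.mem_closure_iff]
    intro ε hε
    obtain ⟨a, ha, b, hb, hab, hvab, hap, hbp⟩ := hlim ε hε
    refine ⟨(2⁻¹ : ℝ) • ((a - c) + (b - c)), Submodule.smul_mem _ _ ?_, ?_⟩
    · refine Submodule.mem_span_singleton_of_inner_eq_zero_of_inner_eq_zero (sub_ne_zero.2 hab)
        hv0 ?_ (by rw [inner_sub_left, real_inner_comm, hvab, real_inner_comm, sub_self])
      rw [mem_sphere_iff_norm] at ha hb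
      rw [show a - b = (a - c) - (b - c) by abel, real_inner_comm,
        real_inner_add_sub_eq_zero_iff, ha, hb]
    · calc dist (p - c) ((2⁻¹ : ℝ) • ((a - c) + (b - c)))
          = ‖(2⁻¹ : ℝ) • ((p - a) + (p - b))‖ := by
            rw [dist_eq_norm]; congr 1; module
        _ ≤ 2⁻¹ * (dist a p + dist b p) := by
            rw [norm_smul, dist_comm a, dist_comm b, dist_eq_norm, dist_eq_norm]
            gcongr
            · norm_num
            · exact norm_add_le _ _
        _ < ε := by linarith
  obtain ⟨s, hs⟩ := Submodule.mem_span_singleton.1 hmem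
  have hsr : |s| = r := by
    rw [mem_sphere_iff_norm, ← hs, norm_smul, hv, mul_one, Real.norm_eq_abs] at hp
    exact hp
  have hps : ⟪v, p⟫ = ⟪v, c⟫ + s := by
    rw [show p = c + s • v by rw [hs]; abel, inner_add_right, inner_smul_right,
      real_inner_self_eq_norm_sq, hv]
    ring
  rcases abs_eq (hsr ▸ abs_nonneg s) |>.1 hsr with rfl | rfl
  · exact Or.inl hps
  · exact Or.inr (by rw [hps]; ring)

lemma exists_forall_inner_eq_of_chord {v n a b : E} {β : ℝ} (hv : v ≠ 0) (hn : n ≠ 0)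
    (hab : a ≠ b) (hvab : ⟪v, a⟫ = ⟪v, b⟫) (ha : ⟪n, a⟫ = β) (hb : ⟪n, b⟫ = β) :
    ∃ t, ∀ x, ⟪n, x⟫ = β → ⟪v, x⟫ = t := by
  have hmem : n ∈ ℝ ∙ v :=
    Submodule.mem_span_singleton_of_inner_eq_zero_of_inner_eq_zero (sub_ne_zero.2 hab) hv
      (by rw [inner_sub_left, real_inner_comm, ha, real_inner_comm, hb, sub_self])
      (by rw [inner_sub_left, real_inner_comm, hvab, real_inner_comm, sub_self])
  obtain ⟨s, rfl⟩ := Submodule.mem_span_singleton.1 hmem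
  have hs : s ≠ 0 := by rintro rfl; simp at hn
  refine ⟨β / s, fun x hx => ?_⟩
  rw [inner_smul_left, RCLike.conj_to_real] at hx
  rw [eq_div_iff hs, ← hx, mul_comm]

end Planar

instance : Fact (finrank ℝ Pt = 2) := ⟨finrank_euclideanSpace_fin⟩

namespace IsCircleOrLine

lemma encard_inter_le_two {C C' : Set Pt} (hC : IsCircleOrLine C) (hC' : IsCircleOrLine C')
    (hne : C ≠ C') : (C ∩ C').encard ≤ 2 := by
  rcases hC with ⟨c, r, -, rfl⟩ | ⟨n, b, hn, rfl⟩ <;>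
    rcases hC' with ⟨c', r', -, rfl⟩ | ⟨n', b', hn', rfl⟩
  · exact encard_sphere_inter_sphere_le_two hne
  · exact encard_sphere_inter_setOf_inner_eq_le_two hn' c r b'
  · exact inter_comm _ _ ▸ encard_sphere_inter_setOf_inner_eq_le_two hn c' r' b
  · exact encard_le_two_of_forall_eq_or_eq fun p₁ h₁ p₂ h₂ h₁₂ _ _ =>
      absurd (setOf_inner_eq_eq_of_mem_of_mem hn hn' h₁₂ h₁.1 h₂.1 h₁.2 h₂.2) hne

lemma encard_image_inner_setOf_isLimitOfOrthogonalChords_le_two {v : Pt} (hv : ‖v‖ = 1)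
    {C : Set Pt} (hC : IsCircleOrLine C) :
    ((fun p => ⟪v, p⟫) '' {p ∈ C | IsLimitOfOrthogonalChords v C p}).encard ≤ 2 := by
  rcases hC with ⟨c, r, -, rfl⟩ | ⟨n, b, hn, rfl⟩
  · calc _ ≤ ({⟪v, c⟫ + r, ⟪v, c⟫ - r} : Set ℝ).encard := by
          refine encard_le_encard ?_
          rintro _ ⟨p, ⟨hp, hlim⟩, rfl⟩
          exact inner_eq_add_or_eq_sub_of_isLimitOfOrthogonalChords hv hp hlim
      _ ≤ 2 := (encard_insert_le _ _).trans (by norm_num)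
  · set L := {x : Pt | ⟪n, x⟫ = b}
    rcases eq_empty_or_nonempty {p ∈ L | IsLimitOfOrthogonalChords v L p} with h | ⟨p, -, hlim⟩
    · simp [h]
    obtain ⟨a, ha, a', ha', haa', hvaa', -⟩ := hlim 1 one_pos
    obtain ⟨t, ht⟩ :=
      exists_forall_inner_eq_of_chord (by rintro rfl; simp at hv) hn haa' hvaa' ha ha'
    calc _ ≤ ({t} : Set ℝ).encard :=
          encard_le_encard (by rintro _ ⟨p, ⟨hp, -⟩, rfl⟩; exact ht p hp)
      _ ≤ 2 := by norm_num

end IsCircleOrLine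

lemma IsCompact.exists_dist_lt_of_injOn {X : Type*} [MetricSpace X] {K : Set X}
    (hK : IsCompact K) {g : X → ℝ} (hg : ContinuousOn g K) (hinj : InjOn g K) {p : X}
    (hp : p ∈ K) {ε : ℝ} (hε : 0 < ε) :
    ∃ δ > 0, ∀ z ∈ K, dist (g z) (g p) < δ → dist z p < ε := by
  have hclosed : IsClosed (g '' (K \ Metric.ball p ε)) :=
    ((hK.diff Metric.isOpen_ball).image_of_continuousOn (hg.mono sdiff_subset)).isClosed
  have hgp : g p ∉ g '' (K \ Metric.ball p ε) := by
    rintro ⟨z, ⟨hz, hzp⟩, hgz⟩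
    exact hzp (hinj hz hp hgz ▸ Metric.mem_ball_self hε)
  obtain ⟨δ, hδ, hball⟩ := Metric.isOpen_iff.1 hclosed.isOpen_compl _ hgp
  refine ⟨δ, hδ, fun z hz hzδ => ?_⟩
  by_contra! h
  exact hball hzδ ⟨z, ⟨hz, by simpa using h⟩, rfl⟩

lemma exists_le_and_le_succ_of_forall_notMem_Ioo {α : Type*} [LinearOrder α] {β : ℕ → α}
    {a b : α} (hab : a < b) (h0 : β 0 ≤ a) :
    ∀ {m : ℕ}, b ≤ β m → (∀ i ≤ m, β i ∉ Ioo a b) → ∃ i < m, β i ≤ a ∧ b ≤ β (i + 1)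
  | 0, hm, _ => absurd (hm.trans h0) hab.not_ge
  | m + 1, hm, h => by
    by_cases hma : β m ≤ a
    · exact ⟨m, m.lt_succ_self, hma, hm⟩
    · obtain ⟨i, hi, hi'⟩ := exists_le_and_le_succ_of_forall_notMem_Ioo hab h0
        (not_lt.1 fun hmb => h m m.le_succ ⟨not_le.1 hma, hmb⟩)
        fun i hi => h i (hi.trans m.le_succ)
      exact ⟨i, hi.trans m.lt_succ_self, hi'⟩

lemma exists_ne_mem_Icc_abs_sub_lt {a b s δ : ℝ} (hab : a < b) (hs : s ∈ Icc a b) (hδ : 0 < δ) :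
    ∃ r ∈ Icc a b, r ≠ s ∧ |r - s| < δ := by
  rcases hs.2.lt_or_eq with hsb | rfl
  · have h := half_pos (lt_min (sub_pos.2 hsb) hδ)
    refine ⟨s + min (b - s) δ / 2, ⟨by linarith [hs.1], by linarith [min_le_left (b - s) δ]⟩,
      (lt_add_of_pos_right s h).ne', ?_⟩
    rw [add_sub_cancel_left, abs_of_pos h]
    linarith [min_le_right (b - s) δ]
  · have h := half_pos (lt_min (sub_pos.2 hab) hδ)
    refine ⟨s - min (s - a) δ / 2, ⟨by linarith [min_le_left (s - a) δ], by linarith⟩,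
      (sub_lt_self s h).ne, ?_⟩
    rw [sub_sub_cancel_left, abs_neg, abs_of_pos h]
    linarith [min_le_right (s - a) δ]

namespace IsMonotoneCircularCurve

variable {v : Pt} {f : ℝ → Pt} {γ : Set Pt} {m : ℕ} {x : ℕ → ℝ}

lemma isCompact (hf : IsMonotoneCircularCurve v f γ m x) : IsCompact γ :=
  hf.2.1 ▸ isCompact_Icc.image_of_continuousOn hf.1

lemma injOn_inner (hf : IsMonotoneCircularCurve v f γ m x) : InjOn (fun p => ⟪v, p⟫) γ := by
  rw [← hf.2.1]
  rintro _ ⟨t, ht, rfl⟩ _ ⟨t', ht', rfl⟩ h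
  rw [hf.2.2.1.injOn ht ht' h]

lemma inner_lt (hf : IsMonotoneCircularCurve v f γ m x) : ⟪v, f 0⟫ < ⟪v, f 1⟫ :=
  hf.2.2.1 (left_mem_Icc.2 zero_le_one) (right_mem_Icc.2 zero_le_one) one_pos

lemma inner_mem_Icc (hf : IsMonotoneCircularCurve v f γ m x) {p : Pt} (hp : p ∈ γ) :
    ⟪v, p⟫ ∈ Icc ⟪v, f 0⟫ ⟪v, f 1⟫ := by
  rw [← hf.2.1] at hp
  obtain ⟨t, ht, rfl⟩ := hp
  exact ⟨hf.2.2.1.monotoneOn (left_mem_Icc.2 zero_le_one) ht ht.1,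
    hf.2.2.1.monotoneOn ht (right_mem_Icc.2 zero_le_one) ht.2⟩

lemma exists_dist_lt (hf : IsMonotoneCircularCurve v f γ m x) {p : Pt} (hp : p ∈ γ) {ε : ℝ}
    (hε : 0 < ε) : ∃ δ > 0, ∀ r ∈ Icc ⟪v, f 0⟫ ⟪v, f 1⟫, |r - ⟪v, p⟫| < δ →
      ∃ z ∈ γ, ⟪v, z⟫ = r ∧ dist z p < ε := by
  obtain ⟨δ, hδ, hnear⟩ := hf.isCompact.exists_dist_lt_of_injOn
    (continuous_const.inner continuous_id).continuousOn hf.injOn_inner hp hε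
  refine ⟨δ, hδ, fun r hr hrδ => ?_⟩
  obtain ⟨t, ht, rfl⟩ := intermediate_value_Icc zero_le_one (continuousOn_const.inner hf.1) hr
  have hft : f t ∈ γ := hf.2.1 ▸ mem_image_of_mem f ht
  exact ⟨f t, hft, rfl, hnear _ hft hrδ⟩

lemma inner_breakpoint_zero (hf : IsMonotoneCircularCurve v f γ m x) :
    ⟪v, f (x 0)⟫ = ⟪v, f 0⟫ := by
  rw [hf.2.2.2.1]

lemma inner_breakpoint_last (hf : IsMonotoneCircularCurve v f γ m x) :
    ⟪v, f (x m)⟫ = ⟪v, f 1⟫ := by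
  rw [hf.2.2.2.2.1]

lemma breakpoint_mem_Icc (hf : IsMonotoneCircularCurve v f γ m x) {i : ℕ} (hi : i ≤ m) :
    x i ∈ Icc 0 1 := by
  obtain ⟨-, -, -, h0, hm, hlt, -⟩ := hf
  have hmono : MonotoneOn x (Iic m) :=
    (strictMonoOn_Iic_of_lt_succ fun i hi => by simpa using hlt i hi).monotoneOn
  exact ⟨h0 ▸ hmono (mem_Iic.2 m.zero_le) (mem_Iic.2 hi) i.zero_le,
    hm ▸ hmono (mem_Iic.2 hi) (mem_Iic.2 le_rfl) hi⟩

lemma exists_isCircleOrLine_of_slab (hf : IsMonotoneCircularCurve v f γ m x) {a b : ℝ}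
    (hab : a < b) (hγ : Icc a b ⊆ Icc ⟪v, f 0⟫ ⟪v, f 1⟫)
    (hbreak : ∀ i ≤ m, ⟪v, f (x i)⟫ ∉ Ioo a b) :
    ∃ C, IsCircleOrLine C ∧ ∀ p ∈ γ, ⟪v, p⟫ ∈ Icc a b → p ∈ C := by
  obtain ⟨i, hi, hia, hib⟩ :=
    exists_le_and_le_succ_of_forall_notMem_Ioo (β := fun i => ⟪v, f (x i)⟫) hab
      (hf.inner_breakpoint_zero ▸ (hγ (left_mem_Icc.2 hab.le)).1)
      (hf.inner_breakpoint_last ▸ (hγ (right_mem_Icc.2 hab.le)).2) hbreak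
  obtain ⟨C, hC, harc⟩ := hf.2.2.2.2.2.2 i hi
  refine ⟨C, hC, fun p hp hpab => harc ?_⟩
  rw [← hf.2.1] at hp
  obtain ⟨t, ht, rfl⟩ := hp
  have hmono := hf.2.2.1
  exact ⟨t, ⟨(hmono.le_iff_le (hf.breakpoint_mem_Icc hi.le) ht).1 (hia.trans hpab.1),
    (hmono.le_iff_le ht (hf.breakpoint_mem_Icc hi)).1 (hpab.2.trans hib)⟩, rfl⟩

end IsMonotoneCircularCurve

section Slab

variable {v : Pt} {f f' : ℝ → Pt} {γ γ' : Set Pt} {m m' : ℕ} {x x' : ℕ → ℝ}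
  {a b : ℝ}

lemma IsProperIntersection.isLimitOfOrthogonalChords
    (hf : IsMonotoneCircularCurve v f γ m x) (hf' : IsMonotoneCircularCurve v f' γ' m' x')
    (hab : a < b) (hγ : Icc a b ⊆ Icc ⟪v, f 0⟫ ⟪v, f 1⟫)
    (hγ' : Icc a b ⊆ Icc ⟪v, f' 0⟫ ⟪v, f' 1⟫) {C : Set Pt}
    (hCγ : ∀ p ∈ γ, ⟪v, p⟫ ∈ Icc a b → p ∈ C) (hCγ' : ∀ p ∈ γ', ⟪v, p⟫ ∈ Icc a b → p ∈ C)
    {p : Pt} (hp : IsProperIntersection γ γ' p) (hpab : ⟪v, p⟫ ∈ Icc a b) :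
    IsLimitOfOrthogonalChords v C p := by
  intro ε hε
  obtain ⟨⟨hpγ, hpγ'⟩, U, hU, hUp⟩ := hp
  obtain ⟨ε₀, hε₀, hball⟩ := Metric.mem_nhds_iff.1 hU
  obtain ⟨δ, hδ, hnear⟩ := hf.exists_dist_lt hpγ (lt_min hε hε₀)
  obtain ⟨δ', hδ', hnear'⟩ := hf'.exists_dist_lt hpγ' (lt_min hε hε₀)
  obtain ⟨r, hr, hrp, hrδ⟩ := exists_ne_mem_Icc_abs_sub_lt hab hpab (lt_min hδ hδ')
  obtain ⟨z, hz, hzr, hzp⟩ := hnear r (hγ hr) (hrδ.trans_le (min_le_left _ _))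
  obtain ⟨z', hz', hz'r, hz'p⟩ := hnear' r (hγ' hr) (hrδ.trans_le (min_le_right _ _))
  refine ⟨z, hCγ z hz (hzr ▸ hr), z', hCγ' z' hz' (hz'r ▸ hr), ?_, hzr.trans hz'r.symm,
    hzp.trans_le (min_le_left _ _), hz'p.trans_le (min_le_left _ _)⟩
  -- `z = z'` would be a second common point of the curves in `U`
  rintro rfl
  have hzU : z ∈ U ∩ (γ ∩ γ') :=
    ⟨hball (Metric.mem_ball.2 (hzp.trans_le (min_le_right _ _))), hz, hz'⟩
  rw [hUp, mem_singleton_iff] at hzU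
  exact hrp (hzU ▸ hzr.symm)

lemma encard_setOf_isProperIntersection_slab_le_two (hv : ‖v‖ = 1)
    (hf : IsMonotoneCircularCurve v f γ m x) (hf' : IsMonotoneCircularCurve v f' γ' m' x')
    (hab : a < b) (hγ : Icc a b ⊆ Icc ⟪v, f 0⟫ ⟪v, f 1⟫)
    (hγ' : Icc a b ⊆ Icc ⟪v, f' 0⟫ ⟪v, f' 1⟫) {C C' : Set Pt} (hC : IsCircleOrLine C)
    (hC' : IsCircleOrLine C') (hCγ : ∀ p ∈ γ, ⟪v, p⟫ ∈ Icc a b → p ∈ C)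
    (hC'γ' : ∀ p ∈ γ', ⟪v, p⟫ ∈ Icc a b → p ∈ C') :
    {p | IsProperIntersection γ γ' p ∧ ⟪v, p⟫ ∈ Icc a b}.encard ≤ 2 := by
  set S := {p | IsProperIntersection γ γ' p ∧ ⟪v, p⟫ ∈ Icc a b}
  by_cases hCC' : C = C'
  · subst hCC'
    have hSC : S ⊆ {p ∈ C | IsLimitOfOrthogonalChords v C p} := fun p (hp : p ∈ S) =>
      ⟨hCγ p hp.1.1.1 hp.2, hp.1.isLimitOfOrthogonalChords hf hf' hab hγ hγ' hCγ hC'γ' hp.2⟩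
    calc S.encard = ((fun p => ⟪v, p⟫) '' S).encard :=
          (hf.injOn_inner.mono fun p hp => hp.1.1.1).encard_image.symm
      _ ≤ _ := encard_le_encard (image_mono hSC)
      _ ≤ 2 := hC.encard_image_inner_setOf_isLimitOfOrthogonalChords_le_two hv
  · have hSCC' : S ⊆ C ∩ C' := fun p hp => ⟨hCγ p hp.1.1.1 hp.2, hC'γ' p hp.1.1.2 hp.2⟩
    exact (encard_le_encard hSCC').trans (hC.encard_inter_le_two hC' hCC')

lemma encard_setOf_isProperIntersection_Icc_le_two (hv : ‖v‖ = 1)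
    (hf : IsMonotoneCircularCurve v f γ m x) (hf' : IsMonotoneCircularCurve v f' γ' m' x')
    (hbreak : ∀ i ≤ m, ⟪v, f (x i)⟫ ∉ Ioo a b) (hbreak' : ∀ j ≤ m', ⟪v, f' (x' j)⟫ ∉ Ioo a b) :
    {p | IsProperIntersection γ γ' p ∧ ⟪v, p⟫ ∈ Icc a b}.encard ≤ 2 := by
  set a' := max a (max ⟪v, f 0⟫ ⟪v, f' 0⟫)
  set b' := min b (min ⟪v, f 1⟫ ⟪v, f' 1⟫)
  have hsub : {p | IsProperIntersection γ γ' p ∧ ⟪v, p⟫ ∈ Icc a b} ⊆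
      {p | IsProperIntersection γ γ' p ∧ ⟪v, p⟫ ∈ Icc a' b'} := by
    rintro p ⟨hp, hpa, hpb⟩
    have h := hf.inner_mem_Icc hp.1.1
    have h' := hf'.inner_mem_Icc hp.1.2
    exact ⟨hp, max_le hpa (max_le h.1 h'.1), le_min hpb (le_min h.2 h'.2)⟩
  refine (encard_le_encard hsub).trans ?_
  rcases lt_or_ge a' b' with hab' | hba'
  · have hIoo : Ioo a' b' ⊆ Ioo a b := Ioo_subset_Ioo (le_max_left _ _) (min_le_left _ _)
    have hγ : Icc a' b' ⊆ Icc ⟪v, f 0⟫ ⟪v, f 1⟫ := Icc_subset_Icc (by simp [a']) (by simp [b'])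
    have hγ' : Icc a' b' ⊆ Icc ⟪v, f' 0⟫ ⟪v, f' 1⟫ :=
      Icc_subset_Icc (by simp [a']) (by simp [b'])
    obtain ⟨C, hC, hCγ⟩ :=
      hf.exists_isCircleOrLine_of_slab hab' hγ fun i hi h => hbreak i hi (hIoo h)
    obtain ⟨C', hC', hC'γ'⟩ :=
      hf'.exists_isCircleOrLine_of_slab hab' hγ' fun j hj h => hbreak' j hj (hIoo h)
    exact encard_setOf_isProperIntersection_slab_le_two hv hf hf' hab' hγ hγ' hC hC' hCγ hC'γ'
  · refine (encard_le_one_iff.2 fun p q hp hq => hf.injOn_inner hp.1.1.1 hq.1.1.1 ?_).trans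
      (by norm_num)
    exact (le_antisymm (hp.2.2.trans hba') hp.2.1).trans
      (le_antisymm (hq.2.2.trans hba') hq.2.1).symm

end Slab

/-- Two mutually monotone circular curves consisting of `m` and `m'`
circular arcs respectively have at most `2(m + m' + 1)` proper intersection points. -/
theorem stmt10 (v : Pt) (hv : ‖v‖ = 1) (γ γ' : Set Pt)
    (f f' : ℝ → Pt) (m m' : ℕ) (x x' : ℕ → ℝ)
    (hf : IsMonotoneCircularCurve v f γ m x)
    (hf' : IsMonotoneCircularCurve v f' γ' m' x') :
    {p : Pt | IsProperIntersection γ γ' p}.encard ≤ 2 * (m + m' + 1) := by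
  classical
  set B : Finset ℝ := (Finset.range (m + 1)).image (fun i => ⟪v, f (x i)⟫) ∪
    (Finset.range (m' + 1)).image (fun j => ⟪v, f' (x' j)⟫)
  have hB : ∀ i ≤ m, ⟪v, f (x i)⟫ ∈ B := fun i hi =>
    Finset.mem_union_left _ (Finset.mem_image_of_mem _ (Finset.mem_range.2 (by omega)))
  have hB' : ∀ j ≤ m', ⟪v, f' (x' j)⟫ ∈ B := fun j hj =>
    Finset.mem_union_right _ (Finset.mem_image_of_mem _ (Finset.mem_range.2 (by omega)))
  have hcard : B.card ≤ m + m' + 2 := calc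
    B.card ≤ (Finset.range (m + 1)).card + (Finset.range (m' + 1)).card :=
      (Finset.card_union_le _ _).trans (add_le_add Finset.card_image_le Finset.card_image_le)
    _ = m + m' + 2 := by simp only [Finset.card_range]; ring
  have hcount := encard_le_card_sub_one_mul_of_forall_Icc (fun p => ⟪v, p⟫) 2 B
    {p | IsProperIntersection γ γ' p}
    (fun p hp => ⟨_, hB 0 m.zero_le, _, hB m le_rfl, by
      simpa [hf.inner_breakpoint_zero, hf.inner_breakpoint_last] using
        ⟨hf.inner_lt, hf.inner_mem_Icc hp.1.1⟩⟩)
    fun a _ b _ _ hcons => encard_setOf_isProperIntersection_Icc_le_two hv hf hf'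
      (fun i hi => hcons _ (hB i hi)) fun j hj => hcons _ (hB' j hj)
  calc _ ≤ _ := hcount
    _ ≤ ((m + m' + 1 : ℕ) : ℕ∞) * 2 := by gcongr; omega
    _ = 2 * (m + m' + 1) := by push_cast; ring
end
end

section
/- Let T be a rooted tree with root rt, with Steiner nodes S and terminal leaves C₁, …, C_K (finite point sets in ℝ²), where every edge is incident to a Steiner node. Define feasible regions R(·) as: R(C_i) = C_i, and for a Steiner node s, R(s) = ⋂_{s' ∈ Ch(s)} (R(s') ⊕ D) where D is the closed unit disk. Then there exists a map φ : S → ℝ² with d_φ(t, t') ≤ 1 for all edges (t, t') of T if and only if R(rt) ≠ ∅. -/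
open scoped Pointwise Classical
noncomputable section

/-- `Desc children s t`: `t` is a node of the subtree rooted at `s`. -/
def Desc {V : Type*} (children : V → Set V) (s t : V) : Prop :=
  Relation.ReflTransGen (fun a b => b ∈ children a) s t

/-- The bottleneck "distance" of the edge from `t` to its child `t'` under a placement
`φ` of the Steiner nodes. -/
def dEdge {V : Type*} (S : Set V) (term : V → Set Pt) (φ : V → Pt) (t t' : V) : ℝ :=
  if t' ∈ S then dist (φ t) (φ t') else Metric.infDist (φ t) (term t')

/-- The feasible regions, defined recursively along the tree (using well-founded
recursion on the descendant relation is avoided by the explicit existential form):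
`R(Cᵢ) = Cᵢ` for terminals and `R(s) = ⋂_{s' ∈ Ch(s)} (R(s') ⊕ D)` for Steiner
nodes.  We encode this by saying that a family `Reg : V → Set Pt` *is* the family of
feasible regions. -/
def IsFeasibleFamily {V : Type*} (children : V → Set V) (S : Set V)
    (term : V → Set Pt) (Reg : V → Set Pt) : Prop :=
  (∀ v, v ∉ S → Reg v = term v) ∧
  (∀ s ∈ S, Reg s = ⋂ s' ∈ children s, (Reg s' + unitDisk))

lemma desc_total {V : Type*} (children : V → Set V)
    (hpar : ∀ u v w, u ∈ children v → u ∈ children w → v = w)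
    {a b c : V} (hac : Desc children a c) (hbc : Desc children b c) :
    Desc children a b ∨ Desc children b a := by
  induction hac using Relation.ReflTransGen.head_induction_on with
  | refl => exact Or.inr hbc
  | head hstep htail ih =>
    rcases ih with h | h
    · exact Or.inl (Relation.ReflTransGen.head hstep h)
    · rcases h.cases_tail with rfl | ⟨m, hbm, hm⟩
      · exact Or.inl (Relation.ReflTransGen.single hstep)
      · cases hpar _ _ _ hm hstep
        exact Or.inr hbm

lemma child_unique {V : Type*} (children : V → Set V)
    (hpar : ∀ u v w, u ∈ children v → u ∈ children w → v = w)
    (hacyc : ∀ v, ¬ Relation.TransGen (fun a b => b ∈ children a) v v)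
    {v s1 s2 t : V} (h1 : s1 ∈ children v) (h2 : s2 ∈ children v)
    (d1 : Desc children s1 t) (d2 : Desc children s2 t) : s1 = s2 := by
  have key : ∀ a b : V, a ∈ children v → b ∈ children v → Desc children a b → a = b := by
    intro a b ha hb hab
    rcases hab.cases_tail with rfl | ⟨m, ham, hm⟩
    · rfl
    · cases hpar _ _ _ hm hb
      exact absurd (Relation.TransGen.head' ha ham) (hacyc v)
  rcases desc_total children hpar d1 d2 with h | h
  · exact key _ _ h1 h2 h
  · exact (key _ _ h2 h1 h).symm

lemma dEdge_congr {V : Type*} (S : Set V) (term : V → Set Pt) {φ ψ : V → Pt} {t t' : V}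
    (h1 : φ t = ψ t) (h2 : φ t' = ψ t') : dEdge S term φ t t' = dEdge S term ψ t t' := by
  unfold dEdge; rw [h1, h2]


/-- In a rooted tree with root `rt`, Steiner nodes `S` and terminal
leaves (finite nonempty point sets), where every edge is incident to a Steiner node,
with feasible regions defined by `R(Cᵢ) = Cᵢ` and
`R(s) = ⋂_{s' ∈ Ch(s)} (R(s') ⊕ D)`, there exists a placement `φ : S → ℝ²` with
`d_φ(t,t') ≤ 1` on every edge of the tree iff `R(rt) ≠ ∅`. -/
theorem stmt16 (V : Type*) [Finite V] (children : V → Set V) (S : Set V) (term : V → Set Pt)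
    (hpar : ∀ u v w, u ∈ children v → u ∈ children w → v = w)
    (hacyc : ∀ v, ¬ Relation.TransGen (fun a b => b ∈ children a) v v)
    (hleaf : ∀ v, v ∉ S → children v = ∅)
    (hinc : ∀ t t', t' ∈ children t → t ∈ S ∨ t' ∈ S)
    (hterm : ∀ v, v ∉ S → (term v).Finite ∧ (term v).Nonempty)
    (rt : V) (hrt : rt ∈ S) (hroot : ∀ v, Desc children rt v)
    (Reg : V → Set Pt) (hReg : IsFeasibleFamily children S term Reg) :
    (∃ φ : V → Pt, ∀ t t', t' ∈ children t → dEdge S term φ t t' ≤ 1) ↔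
      (Reg rt).Nonempty := by
  -- well-foundedness of the child relation
  have wfr : WellFounded (fun a b : V => a ∈ children b) := by
    have htg : WellFounded (Relation.TransGen (fun a b : V => a ∈ children b)) := by
      haveI : IsTrans V (Relation.TransGen fun a b : V => a ∈ children b) :=
        ⟨fun _ _ _ => Relation.TransGen.trans⟩
      haveI : IsIrrefl V (Relation.TransGen fun a b : V => a ∈ children b) :=
        ⟨fun v hv => hacyc v (Relation.transGen_swap.mp hv)⟩
      exact Finite.wellFounded_of_trans_of_irrefl _
    exact Subrelation.wf (r := Relation.TransGen fun a b : V => a ∈ children b)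
      (fun h => Relation.TransGen.single h) htg
  -- membership in Reg s' + unitDisk from a close point
  have memadd : ∀ (x y : Pt) (A : Set Pt), y ∈ A → dist x y ≤ 1 → x ∈ A + unitDisk := by
    intro x y A hy hd
    refine Set.mem_add.2 ⟨y, hy, x - y, ?_, by abel⟩
    rw [unitDisk, mem_closedBall_zero_iff, ← dist_eq_norm]
    exact dist_comm x y ▸ hd
  have memadd' : ∀ (x : Pt) (A : Set Pt), x ∈ A + unitDisk → ∃ y ∈ A, dist x y ≤ 1 := by
    intro x A hx
    obtain ⟨a, ha, b, hb, hab⟩ := Set.mem_add.1 hx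
    refine ⟨a, ha, ?_⟩
    have : x - a = b := by rw [← hab]; abel
    rw [dist_eq_norm, this]
    exact (mem_closedBall_zero_iff.1 hb)
  constructor
  · rintro ⟨φ, hφ⟩
    have fwd : ∀ v, v ∈ S → φ v ∈ Reg v := by
      intro v
      induction v using WellFounded.induction wfr with
      | _ v ih =>
        intro hv
        rw [hReg.2 v hv]
        refine Set.mem_iInter₂.2 fun s' hs' => ?_
        by_cases hS : s' ∈ S
        · have hd : dist (φ v) (φ s') ≤ 1 := by
            have := hφ v s' hs'
            rwa [dEdge, if_pos hS] at this
          exact memadd _ _ _ (ih s' hs' hS) hd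
        · have hinf : Metric.infDist (φ v) (term s') ≤ 1 := by
            have := hφ v s' hs'
            rwa [dEdge, if_neg hS] at this
          obtain ⟨y, hy, hyd⟩ :=
            (hterm s' hS).1.isClosed.exists_infDist_eq_dist (hterm s' hS).2 (φ v)
          refine memadd _ y _ ?_ (by rw [← hyd]; exact hinf)
          rw [hReg.1 s' hS]; exact hy
    exact ⟨φ rt, fwd rt hrt⟩
  · rintro ⟨x0, hx0⟩
    have bwd : ∀ v, v ∈ S → ∀ x ∈ Reg v, ∃ φ : V → Pt, φ v = x ∧
        ∀ t t', Desc children v t → t' ∈ children t → dEdge S term φ t t' ≤ 1 := by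
      intro v
      induction v using WellFounded.induction wfr with
      | _ v ih =>
        intro hv x hx
        rw [hReg.2 v hv] at hx
        have hx' : ∀ s' ∈ children v, x ∈ Reg s' + unitDisk := fun s' hs' =>
          Set.mem_iInter₂.1 hx s' hs'
        -- choice of sub-placements for Steiner children
        have key : ∀ s' : V, ∃ ψ : V → Pt, s' ∈ children v → s' ∈ S →
            (ψ s' ∈ Reg s' ∧ dist x (ψ s') ≤ 1 ∧
              ∀ t t', Desc children s' t → t' ∈ children t → dEdge S term ψ t t' ≤ 1) := by
          intro s'
          by_cases h : s' ∈ children v ∧ s' ∈ S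
          · obtain ⟨y, hy, hyd⟩ := memadd' x _ (hx' s' h.1)
            obtain ⟨ψ, hψ1, hψ2⟩ := ih s' h.1 h.2 y hy
            exact ⟨ψ, fun _ _ => ⟨hψ1 ▸ hy, hψ1 ▸ hyd, hψ2⟩⟩
          · exact ⟨fun _ => x, fun h1 h2 => absurd ⟨h1, h2⟩ h⟩
        choose ψ hψ using key
        set φ : V → Pt := fun t =>
          if t = v then x
          else if h : ∃ s', s' ∈ children v ∧ s' ∈ S ∧ Desc children s' t
            then ψ h.choose t else x with hφdef
        have hφv : φ v = x := by simp [hφdef]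
        have hφeq : ∀ s₀ t, s₀ ∈ children v → s₀ ∈ S → Desc children s₀ t →
            φ t = ψ s₀ t := by
          intro s₀ t h1 h2 h3
          have htv : t ≠ v := by
            rintro rfl
            exact hacyc t (Relation.TransGen.head' h1 h3)
          have hex : ∃ s', s' ∈ children v ∧ s' ∈ S ∧ Desc children s' t := ⟨s₀, h1, h2, h3⟩
          have hch := hex.choose_spec
          have heq : hex.choose = s₀ :=
            child_unique children hpar hacyc hch.1 h1 hch.2.2 h3
          simp only [hφdef, if_neg htv, dif_pos hex, heq]
        refine ⟨φ, hφv, ?_⟩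
        intro t t' hdt he
        rcases hdt.cases_head with rfl | ⟨s₀, hs₀, hdt'⟩
        · -- edge from the root v of this subtree
          by_cases hS : t' ∈ S
          · have ht' : φ t' = ψ t' t' :=
              hφeq t' t' he hS Relation.ReflTransGen.refl
            rw [dEdge, if_pos hS, hφv, ht']
            exact (hψ t' he hS).2.1
          · rw [dEdge, if_neg hS, hφv]
            obtain ⟨y, hy, hyd⟩ := memadd' x _ (hx' t' he)
            rw [hReg.1 t' hS] at hy
            exact le_trans (Metric.infDist_le_dist_of_mem hy) hyd
        · -- edge strictly inside the subtree of a child s₀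
          have hs₀S : s₀ ∈ S := by
            by_contra h
            have : children s₀ = ∅ := hleaf s₀ h
            rcases hdt'.cases_head with rfl | ⟨m, hm, _⟩
            · exact absurd he (by rw [this]; exact Set.notMem_empty t')
            · exact absurd hm (by rw [this]; exact Set.notMem_empty m)
          have hdt'' : Desc children s₀ t' := hdt'.tail he
          rw [dEdge_congr S term (hφeq s₀ t hs₀ hs₀S hdt') (hφeq s₀ t' hs₀ hs₀S hdt'')]
          exact (hψ s₀ hs₀ hs₀S).2.2 t t' hdt' he
    obtain ⟨φ, -, hφ⟩ := bwd rt hrt x0 hx0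
    exact ⟨φ, fun t t' h => hφ t t' (hroot t) h⟩
end
end
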